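/- Let σ ∈ (0, 2/(n-2)₊) and r = 2σ+2. For F : ℂ → ℂ with F(0) = 0 satisfying |F(ψ)-F(φ)| ≤ C(|ψ|^a + |φ|^a)|ψ-φ| for some a ≥ 0, and any Schwartz ψ on ℝⁿ, one has ‖∇(F∘ψ)‖_{L^{(a+2)/(a+1)}(ℝⁿ)} ≤ 2C ‖ψ‖_{L^{a+2}}^a ‖∇ψ‖_{L^{a+2}}. In particular, for f₂(ψ) = -bψ(|ψ|^{2σ}-1)·1_{|ψ|>1}: ‖∇f₂(ψ)‖_{L^{r'}} ≤ C|b| ‖ψ‖_{L^r}^{2σ} ‖∇ψ‖_{L^r}. -/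

import Mathlib

open MeasureTheory Real Filter Topology
open scoped ENNReal

noncomputable section

abbrev E (n : ℕ) := EuclideanSpace ℝ (Fin n)



/-- The superlinear part `f₂(ψ) = -bψ(|ψ|^{2σ}-1)·1_{|ψ|>1}` of the power nonlinearity. -/
def f₂ (b σ : ℝ) (z : ℂ) : ℂ :=
  if ‖z‖ ≤ 1 then 0
  else -(b : ℂ) * z * ((((‖z‖) ^ (2 * σ) : ℝ) : ℂ) - 1)

/-- For `u ∈ [0,1]` and `c > 0`, `1 - u^c ≤ max c 1 * (1 - u)`. -/
lemma aux_one_sub_rpow {c u : ℝ} (hc : 0 < c) (hu0 : 0 ≤ u) (hu1 : u ≤ 1) :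
    1 - u ^ c ≤ max c 1 * (1 - u) := by
  rcases le_or_gt 1 c with h1c | hc1
  · -- Bernoulli
    have hb := one_add_mul_self_le_rpow_one_add (s := u - 1) (by linarith) h1c
    have : 1 + c * (u - 1) ≤ u ^ c := by simpa using hb
    have hM : c ≤ max c 1 := le_max_left _ _
    nlinarith [le_max_left c 1]
  · -- c < 1 : u ≤ u^c on [0,1]
    rcases eq_or_lt_of_le hu0 with rfl | hu0'
    · simp only [Real.zero_rpow hc.ne', sub_zero]
      have : (1:ℝ) ≤ max c 1 := le_max_right _ _
      linarith
    · have h2 : u ^ (1:ℝ) ≤ u ^ c := Real.rpow_le_rpow_of_exponent_ge hu0' hu1 hc1.le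
      rw [Real.rpow_one] at h2
      have hM : (1:ℝ) ≤ max c 1 := le_max_right _ _
      nlinarith

/-- For `0 ≤ t ≤ s` and `c > 0`: `t * (s^c - t^c) ≤ max c 1 * s^c * (s - t)`. -/
lemma aux_claim {c s t : ℝ} (hc : 0 < c) (ht : 0 ≤ t) (hts : t ≤ s) :
    t * (s ^ c - t ^ c) ≤ max c 1 * s ^ c * (s - t) := by
  rcases eq_or_lt_of_le (ht.trans hts) with h0 | hs
  · have : t = 0 := le_antisymm (hts.trans h0.symm.le) ht
    simp [this, ← h0]
  · set u := t / s with hu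
    have hu0 : 0 ≤ u := div_nonneg ht hs.le
    have hu1 : u ≤ 1 := div_le_one_of_le₀ hts hs.le
    have htu : t = u * s := by rw [hu, div_mul_cancel₀ t hs.ne']
    have htc : t ^ c = u ^ c * s ^ c := by
      rw [htu, Real.mul_rpow hu0 hs.le]
    have key := aux_one_sub_rpow hc hu0 hu1
    have hsc : 0 ≤ s ^ c := Real.rpow_nonneg hs.le c
    calc t * (s ^ c - t ^ c) = (u * (1 - u ^ c)) * (s * s ^ c) := by rw [htc, htu]; ring
      _ ≤ (max c 1 * (1 - u)) * (s * s ^ c) := by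
          apply mul_le_mul_of_nonneg_right _ (by positivity)
          calc u * (1 - u ^ c) ≤ 1 * (1 - u ^ c) := by
                apply mul_le_mul_of_nonneg_right hu1
                have := Real.rpow_le_one hu0 hu1 hc.le
                linarith
            _ = 1 - u ^ c := one_mul _
            _ ≤ max c 1 * (1 - u) := key
      _ = max c 1 * s ^ c * (s - u * s) := by ring
      _ = max c 1 * s ^ c * (s - t) := by rw [← htu]

section lip

/-- `G` version: `max (|z|^c - 1) 0`. -/
noncomputable def Gc (c : ℝ) (z : ℂ) : ℝ := max (‖z‖ ^ c - 1) 0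

lemma Gc_nonneg (c : ℝ) (z : ℂ) : 0 ≤ Gc c z := le_max_right _ _

lemma Gc_le (c : ℝ) (z : ℂ) (hc : 0 ≤ c) : Gc c z ≤ ‖z‖ ^ c := by
  apply max_le (by linarith) (Real.rpow_nonneg (norm_nonneg z) c)

lemma Gc_eq (c : ℝ) (z : ℂ) (hc : 0 < c) : Gc c z = max (‖z‖) 1 ^ c - 1 := by
  rcases le_or_gt (‖z‖) 1 with h | h
  · have h2 := Real.rpow_le_one (norm_nonneg z) h hc.le
    rw [Gc, max_eq_right (by linarith), max_eq_right h, Real.one_rpow]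
    norm_num
  · have h2 := Real.one_le_rpow h.le hc.le
    rw [Gc, max_eq_left (by linarith), max_eq_left h.le]

lemma Gc_mono {c : ℝ} (hc : 0 < c) {z w : ℂ} (h : ‖w‖ ≤ ‖z‖) :
    Gc c w ≤ Gc c z := by
  apply max_le_max _ le_rfl
  have := Real.rpow_le_rpow (norm_nonneg w) h hc.le
  linarith

lemma key_aux {c : ℝ} (hc : 0 < c) {z w : ℂ} (hzw : ‖w‖ ≤ ‖z‖) :
    ‖z * (Gc c z : ℂ) - w * (Gc c w : ℂ)‖ ≤
      (1 + max c 1) * (‖z‖ ^ c + ‖w‖ ^ c) * ‖z - w‖ := by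
  set s := ‖z‖ with hs
  set t := ‖w‖ with ht
  have hs0 : 0 ≤ s := norm_nonneg z
  have ht0 : 0 ≤ t := norm_nonneg w
  have hsc0 : 0 ≤ s ^ c := Real.rpow_nonneg hs0 c
  have htc0 : 0 ≤ t ^ c := Real.rpow_nonneg ht0 c
  have hzwabs : s - t ≤ ‖z - w‖ := by
    have := norm_sub_norm_le z w
    simpa using this
  have habs0 : 0 ≤ ‖z - w‖ := norm_nonneg _
  have hdecomp : z * (Gc c z : ℂ) - w * (Gc c w : ℂ) =
      (z - w) * (Gc c z : ℂ) + w * ((Gc c z : ℂ) - (Gc c w : ℂ)) := by ring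
  have hGsub : ‖(Gc c z : ℂ) - (Gc c w : ℂ)‖ = Gc c z - Gc c w := by
    rw [← Complex.ofReal_sub, Complex.norm_real, Real.norm_eq_abs, abs_of_nonneg (sub_nonneg.2 (Gc_mono hc hzw))]
  have hterm2 : t * (Gc c z - Gc c w) ≤ max c 1 * s ^ c * ‖z - w‖ := by
    rcases le_or_gt s 1 with hs1 | hs1
    · have h1 : Gc c z = 0 := by
        rw [Gc, max_eq_right]
        have := Real.rpow_le_one hs0 hs1 hc.le
        linarith
      have h2 : Gc c w = 0 := by
        rw [Gc, max_eq_right]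
        have := Real.rpow_le_one ht0 (hzw.trans hs1) hc.le
        linarith
      rw [h1, h2]
      simp only [sub_zero, mul_zero]
      positivity
    · -- 1 < s
      have hGz : Gc c z = s ^ c - 1 := by
        rw [Gc_eq c z hc, max_eq_left hs1.le]
      have hGw : Gc c w = max t 1 ^ c - 1 := Gc_eq c w hc
      set t' := max t 1 with ht'
      have ht'1 : t ≤ t' := le_max_left _ _
      have ht'0 : 0 ≤ t' := ht0.trans ht'1
      have ht's : t' ≤ s := max_le hzw hs1.le
      have hsub : Gc c z - Gc c w = s ^ c - t' ^ c := by rw [hGz, hGw]; ring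
      have hsubnn : 0 ≤ s ^ c - t' ^ c := by
        have := Real.rpow_le_rpow ht'0 ht's hc.le
        linarith
      calc t * (Gc c z - Gc c w) = t * (s ^ c - t' ^ c) := by rw [hsub]
        _ ≤ t' * (s ^ c - t' ^ c) := mul_le_mul_of_nonneg_right ht'1 hsubnn
        _ ≤ max c 1 * s ^ c * (s - t') := aux_claim hc ht'0 ht's
        _ ≤ max c 1 * s ^ c * (s - t) := by
            apply mul_le_mul_of_nonneg_left (by linarith) (by positivity)
        _ ≤ max c 1 * s ^ c * ‖z - w‖ := by
            apply mul_le_mul_of_nonneg_left hzwabs (by positivity)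
  have hM1 : (1:ℝ) ≤ max c 1 := le_max_right _ _
  calc ‖z * (Gc c z : ℂ) - w * (Gc c w : ℂ)‖
      ≤ ‖(z - w) * (Gc c z : ℂ)‖ + ‖w * ((Gc c z : ℂ) - (Gc c w : ℂ))‖ := by
        rw [hdecomp]; exact norm_add_le _ _
    _ = ‖z - w‖ * Gc c z + t * (Gc c z - Gc c w) := by
        rw [norm_mul, norm_mul, Complex.norm_real, Real.norm_eq_abs, abs_of_nonneg (Gc_nonneg c z), hGsub, ← ht]
    _ ≤ ‖z - w‖ * (s ^ c) + max c 1 * s ^ c * ‖z - w‖ := by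
        have := Gc_le c z hc.le
        have h2 := mul_le_mul_of_nonneg_left this habs0
        linarith [hterm2]
    _ ≤ (1 + max c 1) * (s ^ c + t ^ c) * ‖z - w‖ := by
        nlinarith [mul_nonneg (mul_nonneg (by linarith : (0:ℝ) ≤ 1 + max c 1) htc0) habs0]

end lip


section lip2

lemma f₂_eq (b σ : ℝ) (hσ : 0 < σ) (z : ℂ) :
    f₂ b σ z = -(b : ℂ) * (z * (Gc (2*σ) z : ℂ)) := by
  unfold f₂ Gc
  by_cases h : ‖z‖ ≤ 1
  · have h2 := Real.rpow_le_one (norm_nonneg z) h (by positivity : (0:ℝ) ≤ 2*σ)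
    rw [if_pos h, max_eq_right (by linarith)]
    simp
  · push_neg at h
    have h2 := Real.one_le_rpow h.le (by positivity : (0:ℝ) ≤ 2*σ)
    rw [if_neg (not_le.2 h), max_eq_left (by linarith)]
    push_cast
    ring

lemma f₂_lip (b σ : ℝ) (hσ : 0 < σ) (z w : ℂ) :
    ‖f₂ b σ z - f₂ b σ w‖ ≤
      |b| * (1 + max (2*σ) 1) * (‖z‖ ^ (2*σ) + ‖w‖ ^ (2*σ)) *
        ‖z - w‖ := by
  have hc : (0:ℝ) < 2*σ := by positivity
  rw [f₂_eq b σ hσ z, f₂_eq b σ hσ w, ← mul_sub, norm_mul]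
  have habsb : ‖-(b:ℂ)‖ = |b| := by
    rw [norm_neg, Complex.norm_real, Real.norm_eq_abs]
  rw [habsb]
  have key : ‖z * (Gc (2*σ) z : ℂ) - w * (Gc (2*σ) w : ℂ)‖ ≤
      (1 + max (2*σ) 1) * (‖z‖ ^ (2*σ) + ‖w‖ ^ (2*σ)) *
        ‖z - w‖ := by
    rcases le_total (‖w‖) (‖z‖) with h | h
    · exact key_aux hc h
    · calc ‖z * (Gc (2*σ) z : ℂ) - w * (Gc (2*σ) w : ℂ)‖
          = ‖w * (Gc (2*σ) w : ℂ) - z * (Gc (2*σ) z : ℂ)‖ := by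
            rw [norm_sub_rev]
        _ ≤ (1 + max (2*σ) 1) * (‖w‖ ^ (2*σ) + ‖z‖ ^ (2*σ)) *
            ‖w - z‖ := key_aux hc h
        _ = (1 + max (2*σ) 1) * (‖z‖ ^ (2*σ) + ‖w‖ ^ (2*σ)) *
            ‖z - w‖ := by rw [norm_sub_rev]; ring
  calc |b| * ‖z * (Gc (2*σ) z : ℂ) - w * (Gc (2*σ) w : ℂ)‖
      ≤ |b| * ((1 + max (2*σ) 1) * (‖z‖ ^ (2*σ) + ‖w‖ ^ (2*σ)) *
          ‖z - w‖) := mul_le_mul_of_nonneg_left key (abs_nonneg b)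
    _ = |b| * (1 + max (2*σ) 1) * (‖z‖ ^ (2*σ) + ‖w‖ ^ (2*σ)) *
          ‖z - w‖ := by ring

end lip2

section deriv

set_option maxHeartbeats 1000000 in
lemma pointwise_bound {n : ℕ} (F : ℂ → ℂ) (C a : ℝ) (hC : 0 ≤ C) (ha : 0 ≤ a)
    (hF : ∀ z w : ℂ, ‖F z - F w‖ ≤
        C * ((‖z‖) ^ a + (‖w‖) ^ a) * ‖z - w‖)
    (ψ : SchwartzMap (E n) ℂ) (x : E n) :
    ‖fderiv ℝ (fun y => F (ψ y)) x‖ ≤ 2 * C * (‖ψ x‖ ^ a * ‖fderiv ℝ (⇑ψ) x‖) := by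
  by_cases hd : DifferentiableAt ℝ (fun y => F (ψ y)) x
  · refine ContinuousLinearMap.opNorm_le_bound _ (by positivity) fun v => ?_
    have hc : Tendsto (fun k : ℕ => ‖(k : ℝ)‖) atTop atTop := by
      simpa [Real.norm_natCast] using tendsto_natCast_atTop_atTop (R := ℝ)
    have h1 := (hd.hasFDerivAt.lim v hc).norm
    have h2 := ((ψ.differentiable.differentiableAt (x := x)).hasFDerivAt.lim v hc).norm
    have hy : Tendsto (fun k : ℕ => x + ((k:ℝ))⁻¹ • v) atTop (𝓝 x) := by
      have h3 : Tendsto (fun k : ℕ => ((k:ℝ))⁻¹) atTop (𝓝 0) :=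
        tendsto_inv_atTop_zero.comp (tendsto_natCast_atTop_atTop)
      simpa using tendsto_const_nhds.add (h3.smul_const v)
    have hψy : Tendsto (fun k : ℕ => ψ (x + ((k:ℝ))⁻¹ • v)) atTop (𝓝 (ψ x)) :=
      (ψ.continuous.tendsto x).comp hy
    have habs : Tendsto (fun k : ℕ => ‖ψ (x + ((k:ℝ))⁻¹ • v)‖ ^ a) atTop (𝓝 (‖ψ x‖ ^ a)) := by
      have h3 : ContinuousAt (fun t : ℝ => t ^ a) ‖ψ x‖ :=
        Real.continuousAt_rpow_const _ _ (Or.inr ha)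
      exact h3.tendsto.comp (hψy.norm)
    have hle : ∀ k : ℕ, ‖(k:ℝ) • (F (ψ (x + ((k:ℝ))⁻¹ • v)) - F (ψ x))‖ ≤
        C * (‖ψ (x + ((k:ℝ))⁻¹ • v)‖ ^ a + ‖ψ x‖ ^ a) *
          ‖(k:ℝ) • (ψ (x + ((k:ℝ))⁻¹ • v) - ψ x)‖ := by
      intro k
      have h4 := hF (ψ (x + ((k:ℝ))⁻¹ • v)) (ψ x)
      rw [norm_smul, norm_smul, mul_left_comm]
      refine mul_le_mul_of_nonneg_left ?_ (norm_nonneg _)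
      simpa using h4
    have hrhs : Tendsto (fun k : ℕ => C * (‖ψ (x + ((k:ℝ))⁻¹ • v)‖ ^ a + ‖ψ x‖ ^ a) *
        ‖(k:ℝ) • (ψ (x + ((k:ℝ))⁻¹ • v) - ψ x)‖) atTop
        (𝓝 (C * (‖ψ x‖ ^ a + ‖ψ x‖ ^ a) * ‖fderiv ℝ (⇑ψ) x v‖)) :=
      ((habs.add tendsto_const_nhds).const_mul C).mul h2
    have key := le_of_tendsto_of_tendsto' h1 hrhs hle
    have h5 : ‖fderiv ℝ (⇑ψ) x v‖ ≤ ‖fderiv ℝ (⇑ψ) x‖ * ‖v‖ :=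
      ContinuousLinearMap.le_opNorm _ v
    have ha2 : (0:ℝ) ≤ ‖ψ x‖ ^ a := Real.rpow_nonneg (norm_nonneg _) a
    calc ‖fderiv ℝ (fun y => F (ψ y)) x v‖
        ≤ C * (‖ψ x‖ ^ a + ‖ψ x‖ ^ a) * ‖fderiv ℝ (⇑ψ) x v‖ := key
      _ = 2 * C * ‖ψ x‖ ^ a * ‖fderiv ℝ (⇑ψ) x v‖ := by ring
      _ ≤ 2 * C * ‖ψ x‖ ^ a * (‖fderiv ℝ (⇑ψ) x‖ * ‖v‖) := by
          apply mul_le_mul_of_nonneg_left h5 (by positivity)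
      _ = 2 * C * (‖ψ x‖ ^ a * ‖fderiv ℝ (⇑ψ) x‖) * ‖v‖ := by ring
  · rw [fderiv_zero_of_not_differentiableAt hd]
    simp only [norm_zero]
    positivity

end deriv


section main

set_option maxHeartbeats 1000000 in
lemma main1 {n : ℕ} (F : ℂ → ℂ) (C a : ℝ) (hC : 0 ≤ C) (ha : 0 ≤ a)
    (hF : ∀ z w : ℂ, ‖F z - F w‖ ≤
        C * ((‖z‖) ^ a + (‖w‖) ^ a) * ‖z - w‖)
    (ψ : SchwartzMap (E n) ℂ) :
    eLpNorm (fun x => fderiv ℝ (fun y => F (ψ y)) x)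
        (ENNReal.ofReal ((a + 2) / (a + 1))) volume ≤
      ENNReal.ofReal (2 * C) *
        (eLpNorm (⇑ψ) (ENNReal.ofReal (a + 2)) volume) ^ a *
          eLpNorm (fun x => fderiv ℝ (⇑ψ) x) (ENNReal.ofReal (a + 2)) volume := by
  have hpt := pointwise_bound F C a hC ha hF ψ
  have hDcont : Continuous fun x => fderiv ℝ (⇑ψ) x :=
    (ψ.smooth ⊤).continuous_fderiv (by simp)
  rcases eq_or_lt_of_le ha with rfl | ha'
  · -- a = 0
    have he : ENNReal.ofReal (((0:ℝ) + 2) / ((0:ℝ) + 1)) = ENNReal.ofReal ((0:ℝ) + 2) := by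
      norm_num
    rw [he, ENNReal.rpow_zero, mul_one]
    have hfe : (fun x : E n => 2 * C * ‖fderiv ℝ (⇑ψ) x‖)
        = (2 * C) • (fun x : E n => ‖fderiv ℝ (⇑ψ) x‖) := by
      funext x; simp [smul_eq_mul]
    calc eLpNorm (fun x => fderiv ℝ (fun y => F (ψ y)) x) (ENNReal.ofReal ((0:ℝ) + 2)) volume
        ≤ eLpNorm (fun x : E n => 2 * C * ‖fderiv ℝ (⇑ψ) x‖) (ENNReal.ofReal ((0:ℝ) + 2))
            volume := eLpNorm_mono_real (fun x => by simpa using hpt x)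
      _ = ENNReal.ofReal (2*C) *
            eLpNorm (fun x => fderiv ℝ (⇑ψ) x) (ENNReal.ofReal ((0:ℝ) + 2)) volume := by
          rw [hfe, eLpNorm_const_smul, Real.enorm_eq_ofReal (by positivity), eLpNorm_norm]
  · -- a > 0
    set p := ENNReal.ofReal ((a + 2) / (a + 1)) with hp
    set q := ENNReal.ofReal ((a + 2) / a) with hq0
    set r := ENNReal.ofReal (a + 2) with hr
    have ha2 : (0:ℝ) < a + 2 := by linarith
    have hpqr : 1 / p = 1 / q + 1 / r := by
      rw [one_div, one_div, one_div, hp, hq0, hr,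
        ← ENNReal.ofReal_inv_of_pos (by positivity : (0:ℝ) < (a+2)/(a+1)),
        ← ENNReal.ofReal_inv_of_pos (by positivity : (0:ℝ) < (a+2)/a),
        ← ENNReal.ofReal_inv_of_pos ha2,
        ← ENNReal.ofReal_add (by positivity) (by positivity)]
      congr 1
      field_simp
    have hφ : AEStronglyMeasurable (fun x => ‖ψ x‖ ^ a) (volume : Measure (E n)) :=
      ((ψ.continuous.norm).rpow_const (fun x => Or.inr ha)).aestronglyMeasurable
    have hHold := eLpNorm_smul_le_mul_eLpNorm (f := fun x => ‖fderiv ℝ (⇑ψ) x‖)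
      (φ := fun x => ‖ψ x‖ ^ a) (hDcont.norm.aestronglyMeasurable) hφ
        (hpqr := ⟨by simpa only [one_div] using hpqr.symm⟩)
    have hqr : q * ENNReal.ofReal a = r := by
      rw [hq0, hr, ← ENNReal.ofReal_mul (by positivity)]
      congr 1
      field_simp
    have hfe : (fun x : E n => 2 * C * (‖ψ x‖ ^ a * ‖fderiv ℝ (⇑ψ) x‖))
        = (2 * C) • ((fun x : E n => ‖ψ x‖ ^ a) • (fun x : E n => ‖fderiv ℝ (⇑ψ) x‖)) := by
      funext x; simp [smul_eq_mul]
    calc eLpNorm (fun x => fderiv ℝ (fun y => F (ψ y)) x) p volume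
        ≤ eLpNorm (fun x : E n => 2 * C * (‖ψ x‖ ^ a * ‖fderiv ℝ (⇑ψ) x‖)) p volume :=
          eLpNorm_mono_real (fun x => hpt x)
      _ = ENNReal.ofReal (2*C) *
            eLpNorm ((fun x : E n => ‖ψ x‖ ^ a) • (fun x : E n => ‖fderiv ℝ (⇑ψ) x‖)) p
              volume := by
          rw [hfe, eLpNorm_const_smul, Real.enorm_eq_ofReal (by positivity)]
      _ ≤ ENNReal.ofReal (2*C) *
            (eLpNorm (fun x => ‖ψ x‖ ^ a) q volume *
              eLpNorm (fun x => ‖fderiv ℝ (⇑ψ) x‖) r volume) := mul_le_mul_right hHold _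
      _ = ENNReal.ofReal (2*C) *
            ((eLpNorm (⇑ψ) r volume) ^ a * eLpNorm (fun x => fderiv ℝ (⇑ψ) x) r volume) := by
          rw [eLpNorm_norm_rpow (⇑ψ) ha', hqr, eLpNorm_norm]
      _ = ENNReal.ofReal (2*C) * (eLpNorm (⇑ψ) r volume) ^ a *
            eLpNorm (fun x => fderiv ℝ (⇑ψ) x) r volume := (mul_assoc _ _ _).symm

end main


theorem stmt_18 (n : ℕ) (hn : 0 < n) (σ : ℝ) (hσ : 0 < σ)
    (hσ' : 2 < n → σ < 2 / ((n : ℝ) - 2)) :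
    (∀ (F : ℂ → ℂ) (C a : ℝ), 0 ≤ C → 0 ≤ a → F 0 = 0 →
      (∀ z w : ℂ, ‖F z - F w‖ ≤
          C * ((‖z‖) ^ a + (‖w‖) ^ a) * ‖z - w‖) →
      ∀ ψ : SchwartzMap (E n) ℂ,
        eLpNorm (fun x => fderiv ℝ (fun y => F (ψ y)) x)
            (ENNReal.ofReal ((a + 2) / (a + 1))) volume ≤
          ENNReal.ofReal (2 * C) *
            (eLpNorm (⇑ψ) (ENNReal.ofReal (a + 2)) volume) ^ a *
              eLpNorm (fun x => fderiv ℝ (⇑ψ) x) (ENNReal.ofReal (a + 2)) volume) ∧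
    (∃ C : ℝ, 0 < C ∧ ∀ b : ℝ, ∀ ψ : SchwartzMap (E n) ℂ,
      eLpNorm (fun x => fderiv ℝ (fun y => f₂ b σ (ψ y)) x)
          (ENNReal.ofReal ((2 * σ + 2) / (2 * σ + 1))) volume ≤
        ENNReal.ofReal (C * |b|) *
          (eLpNorm (⇑ψ) (ENNReal.ofReal (2 * σ + 2)) volume) ^ (2 * σ) *
            eLpNorm (fun x => fderiv ℝ (⇑ψ) x) (ENNReal.ofReal (2 * σ + 2)) volume) := by
  have hc2 : (0:ℝ) ≤ 2 * σ := by positivity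
  have hmax1 : (1:ℝ) ≤ max (2*σ) 1 := le_max_right _ _
  constructor
  · exact fun F C a hC ha _ hF ψ => main1 F C a hC ha hF ψ
  · refine ⟨2 * (1 + max (2*σ) 1), by linarith, fun b ψ => ?_⟩
    have h := main1 (f₂ b σ) (|b| * (1 + max (2*σ) 1)) (2*σ)
      (mul_nonneg (abs_nonneg b) (by linarith)) hc2
      (fun z w => f₂_lip b σ hσ z w) ψ
    have hcc : 2 * (|b| * (1 + max (2*σ) 1)) = 2 * (1 + max (2*σ) 1) * |b| := by ring
    rw [hcc] at h
    exact h

end
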